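/- Let w be a scalar with |w| = 1 and A_w the weighted backward shift on X, A_w x = w(x_{k+1})_{k∈ℕ}. Then every periodic point of A_w (i.e., every x ∈ X with A_w^N x = x for some N ∈ ℕ) is a constant sequence: Per(A_w) ⊆ span{(1,1,1,...)}. -/

import Mathlib

/-!
Since `‖w ^ N‖ = 1`, the periodicity relation makes `k ↦ ‖x (k + 1) - x k‖` periodic with
period `N`. If `x` is not constant, this difference is then some `d > 0` along a whole residue
class mod `N`. Writing `x (k + 1) - x k = (k + 2) * Δₖ + x k / (k + 1)`, where `Δₖ` is the
increment summed in the norm of `X`, and using `x k / (k + 1) → 0`, gives `‖Δₖ‖ ≥ d / (6 k)` on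
that residue class for large `k`, so the harmonic series over a residue class would converge.
-/

open Filter Topology

/-- Membership in the complex space `X` (0-based: `x k` is the paper's
`x_{k+1}`). -/
def MemXC (x : ℕ → ℂ) : Prop :=
  Summable (fun k : ℕ => ‖x (k + 1) / ((k : ℂ) + 2) - x k / ((k : ℂ) + 1)‖) ∧
  Tendsto (fun k : ℕ => x k / ((k : ℂ) + 1)) atTop (𝓝 0)

theorem norm_sub_le_add_two_mul_norm_sub_div {𝕜 : Type*} [RCLike 𝕜] (a b : 𝕜) (k : ℕ) :
    ‖a - b‖ ≤ (k + 2) * ‖a / ((k : 𝕜) + 2) - b / ((k : 𝕜) + 1)‖ + ‖b / ((k : 𝕜) + 1)‖ := by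
  have hk1 : (k : 𝕜) + 1 ≠ 0 := by exact_mod_cast k.succ_ne_zero
  have hk2 : (k : 𝕜) + 2 ≠ 0 := by exact_mod_cast (k + 1).succ_ne_zero
  have hnorm : ‖(k : 𝕜) + 2‖ = k + 2 := by exact_mod_cast RCLike.norm_natCast (K := 𝕜) (k + 2)
  calc ‖a - b‖
        = ‖((k : 𝕜) + 2) * (a / ((k : 𝕜) + 2) - b / ((k : 𝕜) + 1)) + b / ((k : 𝕜) + 1)‖ := by
        congr 1
        field_simp
        ring
    _ ≤ _ := by rw [← hnorm, ← norm_mul]; exact norm_add_le _ _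

theorem periodic_norm_sub_of_mul_add_eq {𝕜 : Type*} [NormedDivisionRing 𝕜] {c : 𝕜} (hc : ‖c‖ = 1)
    {x : ℕ → 𝕜} {N : ℕ} (h : ∀ k, c * x (k + N) = x k) :
    Function.Periodic (fun k => ‖x (k + 1) - x k‖) N := fun k => by
  show ‖x (k + N + 1) - x (k + N)‖ = ‖x (k + 1) - x k‖
  rw [← one_mul ‖_‖, ← hc, ← norm_mul, mul_sub, add_right_comm, h, h]

theorem MemXC.not_forall_le_norm_sub_of_cast_eq {x : ℕ → ℂ} (hx : MemXC x) {N : ℕ} (hN : N ≠ 0)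
    (a : ZMod N) {d : ℝ} (hd : 0 < d) :
    ¬ ∀ n : ℕ, (n : ZMod N) = a → d ≤ ‖x (n + 1) - x n‖ := by
  intro h
  refine Real.not_summable_indicator_one_div_natCast hN a <|
    (hx.1.mul_left (6 / d)).of_norm_bounded_eventually_nat ?_
  have hsmall : ∀ᶠ n : ℕ in atTop, ‖x n / ((n : ℂ) + 1)‖ ≤ d / 2 :=
    hx.2.norm.eventually (ge_mem_nhds (by simpa using half_pos hd))
  filter_upwards [hsmall, eventually_ge_atTop 1] with n hn hn1
  by_cases hna : (n : ZMod N) = a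
  · have hbound := (h n hna).trans (norm_sub_le_add_two_mul_norm_sub_div (x (n + 1)) (x n) n)
    have hΔ := norm_nonneg (x (n + 1) / ((n : ℂ) + 2) - x n / ((n : ℂ) + 1))
    generalize ‖x (n + 1) / ((n : ℂ) + 2) - x n / ((n : ℂ) + 1)‖ = Δ at hΔ hbound ⊢
    have hn1' : (1 : ℝ) ≤ n := by exact_mod_cast hn1
    have hd_le : d ≤ 6 * n * Δ := by nlinarith
    rw [Set.indicator_of_mem (s := {n : ℕ | (n : ZMod N) = a}) hna,
      Real.norm_of_nonneg (by positivity), div_le_iff₀ (by positivity)]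
    calc 1 = d / d := (div_self hd.ne').symm
      _ ≤ 6 * n * Δ / d := by gcongr
      _ = 6 / d * Δ * n := by ring
  · rw [Set.indicator_of_notMem (s := {n : ℕ | (n : ZMod N) = a}) hna, norm_zero]
    positivity

/-- For `|w| = 1`, every periodic point of the weighted backward shift
`A_w x = w (x_{k+1})` on `X` (i.e., every `x ∈ X` with `A_w^N x = x` for some
`N ≥ 1`) is a constant sequence. -/
theorem stmt_14 (w : ℂ) (hw : ‖w‖ = 1) (x : ℕ → ℂ) (hx : MemXC x)
    (N : ℕ) (hN : 0 < N) (hper : ∀ k : ℕ, w ^ N * x (k + N) = x k) :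
    ∃ c : ℂ, x = fun _ => c := by
  have hdiff := periodic_norm_sub_of_mul_add_eq (by rw [norm_pow, hw, one_pow]) hper
  have hstep : ∀ r, x (r + 1) = x r := by
    intro r
    by_contra hne
    refine hx.not_forall_le_norm_sub_of_cast_eq hN.ne' r (norm_pos_iff.2 (sub_ne_zero.2 hne))
      fun n hn => le_of_eq ?_
    rw [← hdiff.map_mod_nat n, ← hdiff.map_mod_nat r, (ZMod.natCast_eq_natCast_iff' n r N).1 hn]
  exact ⟨x 0, funext fun n => Nat.rec rfl (fun n ih => (hstep n).trans ih) n⟩
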